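/- arXiv:2109.00878 — 3 statements merged into one kernel-verified Lean document; each statement's English description precedes it below -/
import Mathlib

section
/- Let Γ be a commutative ring and G₁, G₂ centrally Γ-graded groups. On the direct product G₁ × G₂, the operation (g₁,g₂)·(h₁,h₂) = (Z₁(d(h₁)d(g₂))·g₁h₁, g₂h₂) is a group law, with identity (e,e) and inverse of (g₁,g₂) equal to (Z₁(d(g₂)d(g₁))·g₁⁻¹, g₂⁻¹). -/
/-- the twisted law `(g₁,g₂)·(h₁,h₂) = (Z₁(d(h₁)d(g₂))g₁h₁, g₂h₂)` on
the product of two centrally Γ-graded groups is a group law with the stated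
identity and inverses. -/
theorem twisted_product_is_group
    {G₁ G₂ Γ : Type*} [Group G₁] [Group G₂] [CommRing Γ]
    (d₁ : G₁ → Γ) (hd₁ : ∀ a b : G₁, d₁ (a * b) = d₁ a + d₁ b)
    (d₂ : G₂ → Γ) (hd₂ : ∀ a b : G₂, d₂ (a * b) = d₂ a + d₂ b)
    (Z₁ : Γ → G₁) (hZ₁add : ∀ x y : Γ, Z₁ (x + y) = Z₁ x * Z₁ y)
    (hZ₁cent : ∀ (x : Γ) (g : G₁), Z₁ x * g = g * Z₁ x)
    (hd₁Z : ∀ x : Γ, d₁ (Z₁ x) = 0)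
    (Z₂ : Γ → G₂) (hZ₂add : ∀ x y : Γ, Z₂ (x + y) = Z₂ x * Z₂ y)
    (hZ₂cent : ∀ (x : Γ) (g : G₂), Z₂ x * g = g * Z₂ x)
    (hd₂Z : ∀ x : Γ, d₂ (Z₂ x) = 0) :
    let m : G₁ × G₂ → G₁ × G₂ → G₁ × G₂ :=
      fun g h => (Z₁ (d₁ h.1 * d₂ g.2) * g.1 * h.1, g.2 * h.2)
    (∀ x y z : G₁ × G₂, m (m x y) z = m x (m y z)) ∧
      (∀ x : G₁ × G₂, m (1, 1) x = x) ∧ (∀ x : G₁ × G₂, m x (1, 1) = x) ∧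
      (∀ g : G₁ × G₂,
        m g (Z₁ (d₂ g.2 * d₁ g.1) * g.1⁻¹, g.2⁻¹) = (1, 1) ∧
        m (Z₁ (d₂ g.2 * d₁ g.1) * g.1⁻¹, g.2⁻¹) g = (1, 1)) := by
  intro m
  have h1 : d₁ (1 : G₁) = 0 := by
    have h := hd₁ 1 1; simp only [mul_one] at h; exact (left_eq_add.mp h)
  have h2 : d₂ (1 : G₂) = 0 := by
    have h := hd₂ 1 1; simp only [mul_one] at h; exact (left_eq_add.mp h)
  have hinv1 : ∀ a : G₁, d₁ a⁻¹ = -d₁ a := by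
    intro a; have h := hd₁ a a⁻¹; rw [mul_inv_cancel, h1] at h
    exact eq_neg_of_add_eq_zero_left (by rw [add_comm]; exact h.symm)
  have hinv2 : ∀ a : G₂, d₂ a⁻¹ = -d₂ a := by
    intro a; have h := hd₂ a a⁻¹; rw [mul_inv_cancel, h2] at h
    exact eq_neg_of_add_eq_zero_left (by rw [add_comm]; exact h.symm)
  have hZ0 : Z₁ (0 : Γ) = 1 := by
    have h : Z₁ 0 * (1 : G₁) = Z₁ 0 * Z₁ 0 := by
      rw [mul_one]; simpa using hZ₁add 0 0
    exact (mul_left_cancel h).symm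
  have key : ∀ (γ : Γ) (u v : G₁), u * (Z₁ γ * v) = Z₁ γ * (u * v) := by
    intro γ u v; rw [← mul_assoc, ← hZ₁cent, mul_assoc]
  have collect : ∀ (a b : Γ) (w : G₁), Z₁ a * (Z₁ b * w) = Z₁ (a + b) * w := by
    intro a b w; rw [hZ₁add, mul_assoc]
  refine ⟨?_, ?_, ?_, ?_⟩
  · intro x y z
    simp only [m, Prod.mk.injEq]
    refine ⟨?_, (mul_assoc _ _ _)⟩
    simp only [hd₁, hd₂, hd₁Z, mul_assoc]
    conv_rhs => rw [key]
    simp only [collect]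
    congr 1; ring
  · intro x
    simp only [m, h1, h2, zero_mul, mul_zero, hZ0, one_mul, mul_one]
  · intro x
    simp only [m, h1, h2, zero_mul, mul_zero, hZ0, one_mul, mul_one]
  · intro g
    constructor
    · simp only [m, Prod.mk.injEq, mul_inv_cancel, and_true]
      simp only [hd₁, hd₁Z, hinv1, mul_assoc]
      rw [key]
      simp only [collect, mul_inv_cancel, mul_one]
      rw [← hZ₁add, show (0 + -d₁ g.1) * d₂ g.2 + d₂ g.2 * d₁ g.1 = (0:Γ) by ring, hZ0]
    · simp only [m, Prod.mk.injEq, inv_mul_cancel, and_true]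
      simp only [hinv2, mul_assoc, collect]
      rw [inv_mul_cancel, mul_one]
      rw [show d₁ g.1 * -d₂ g.2 + d₂ g.2 * d₁ g.1 = (0:Γ) by ring, hZ0]
end

section
/- In the twisted product G₁ ×̂ G₂ of two centrally Γ-graded groups, the product of n elements (g₁₁,g₁₂), …, (gₙ₁,gₙ₂) equals (Z(u)·g₁₁⋯gₙ₁, g₁₂⋯gₙ₂), where u = Σ_{i<j} d(g_{i2})·d(g_{j1}). -/
section aux
variable {Γ : Type*} [CommRing Γ]

lemma sum_pairs_succ (n : ℕ) (f : Fin (n+1) → Fin (n+1) → Γ) :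
    ∑ p ∈ Finset.univ.filter (fun p : Fin (n+1) × Fin (n+1) => p.1 < p.2),
        f p.1 p.2 =
      (∑ j : Fin n, f 0 j.succ) +
      ∑ p ∈ Finset.univ.filter (fun p : Fin n × Fin n => p.1 < p.2),
        f p.1.succ p.2.succ := by
  simp only [Finset.sum_filter, Fintype.sum_prod_type]
  rw [Fin.sum_univ_succ]
  congr 1
  · rw [Fin.sum_univ_succ]
    simp [Fin.succ_pos]
  · apply Finset.sum_congr rfl
    intro i _
    rw [Fin.sum_univ_succ]
    simp [Fin.succ_lt_succ_iff, Fin.not_lt_zero]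

end aux

section aux2
variable {G₁ Γ : Type*} [Group G₁] [CommRing Γ]

lemma d_one (d₁ : G₁ → Γ) (hd₁ : ∀ a b : G₁, d₁ (a * b) = d₁ a + d₁ b) :
    d₁ (1 : G₁) = 0 := by
  have := hd₁ 1 1; simp at this; exact this

lemma d_prod (d₁ : G₁ → Γ) (hd₁ : ∀ a b : G₁, d₁ (a * b) = d₁ a + d₁ b)
    (l : List G₁) : d₁ l.prod = (l.map d₁).sum := by
  induction l with
  | nil => simpa using d_one d₁ hd₁
  | cons a t ih => simp [hd₁, ih]

end aux2

/-- product of n elements in the twisted product G₁ ×̂ G₂. -/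
theorem twisted_product_of_n_elements
    {G₁ G₂ Γ : Type*} [Group G₁] [Group G₂] [CommRing Γ]
    (d₁ : G₁ → Γ) (hd₁ : ∀ a b : G₁, d₁ (a * b) = d₁ a + d₁ b)
    (d₂ : G₂ → Γ) (hd₂ : ∀ a b : G₂, d₂ (a * b) = d₂ a + d₂ b)
    (Z₁ : Γ → G₁) (hZ₁add : ∀ x y : Γ, Z₁ (x + y) = Z₁ x * Z₁ y)
    (hZ₁cent : ∀ (x : Γ) (g : G₁), Z₁ x * g = g * Z₁ x)
    (hd₁Z : ∀ x : Γ, d₁ (Z₁ x) = 0)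
    (n : ℕ) (g : Fin n → G₁ × G₂) :
    (List.ofFn g).foldr
        (fun a b => (Z₁ (d₁ b.1 * d₂ a.2) * a.1 * b.1, a.2 * b.2)) (1, 1) =
      (Z₁ (∑ p ∈ Finset.univ.filter (fun p : Fin n × Fin n => p.1 < p.2),
              d₂ (g p.1).2 * d₁ (g p.2).1) *
          (List.ofFn fun i => (g i).1).prod,
        (List.ofFn fun i => (g i).2).prod) := by
  have hZ0 : Z₁ 0 = 1 := by
    have h := (hZ₁add 0 0).symm
    rw [add_zero] at h
    exact mul_eq_left.mp h
  induction n with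
  | zero =>
    simp [hZ0]
  | succ n ih =>
    have htail := ih (fun i => g i.succ)
    rw [List.ofFn_succ, List.foldr_cons, htail]
    set S : Γ := ∑ p ∈ Finset.univ.filter (fun p : Fin n × Fin n => p.1 < p.2),
        d₂ (g p.1.succ).2 * d₁ (g p.2.succ).1 with hS
    set P : G₁ := (List.ofFn fun i : Fin n => (g i.succ).1).prod with hP
    have hdP : d₁ (Z₁ S * P) = d₁ P := by
      rw [hd₁, hd₁Z, zero_add]
    have hsum : (∑ p ∈ Finset.univ.filter
          (fun p : Fin (n+1) × Fin (n+1) => p.1 < p.2),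
          d₂ (g p.1).2 * d₁ (g p.2).1) =
        d₂ (g 0).2 * d₁ P + S := by
      rw [sum_pairs_succ n (fun i j => d₂ (g i).2 * d₁ (g j).1)]
      congr 1
      rw [hP, d_prod d₁ hd₁, ← Finset.mul_sum]
      congr 1
      rw [List.map_ofFn, List.sum_ofFn]
      rfl
    rw [Prod.mk.injEq]
    refine ⟨?_, ?_⟩
    · rw [hsum, hdP, mul_comm (d₁ P) (d₂ (g 0).2), hZ₁add, List.ofFn_succ,
        List.prod_cons, ← hP, mul_assoc, mul_assoc,
        ← mul_assoc (g 0).1 (Z₁ S) P, ← hZ₁cent, mul_assoc (Z₁ S) (g 0).1 P]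
    · rw [List.ofFn_succ, List.prod_cons]
end

section
/- For n ≥ 2 and t ∈ {1,Z}ⁿ, the even part Q(t)₀ = kernel of the grading d : Q(t) → ℤ/2ℤ is isomorphic to Q(Zt₁t₂, Zt₁t₃, …, Zt₁tₙ); in particular (Qₙ)₀ ≅ Q_{0,n−1} and the even part has index 2 in Q(t). -/
namespace CliffordAux

lemma z2cases (a : ZMod 2) : a = 0 ∨ a = 1 := by revert a; decide

lemma z2add (a : ZMod 2) : a + a = 0 := by revert a; decide

variable {G : Type*} [Group G] {n : ℕ}

def zp (Z : G) (a : ZMod 2) : G := Z ^ a.val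

def delta (i : Fin n) : Fin n → ZMod 2 := fun l => if l = i then 1 else 0

def W (e : Fin n → G) (b : Fin n → ZMod 2) (L : List (Fin n)) : G :=
  (L.map fun i => e i ^ (b i).val).prod

def qL (ε b d : Fin n → ZMod 2) : List (Fin n) → ZMod 2
  | [] => 0
  | i :: L => ε i * b i * d i + d i * (L.map b).sum + qL ε b d L

def star (ε : Fin n → ZMod 2) (x y : ZMod 2 × (Fin n → ZMod 2)) :
    ZMod 2 × (Fin n → ZMod 2) :=
  (x.1 + y.1 + qL ε x.2 y.2 (List.finRange n), x.2 + y.2)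

def f (Z : G) (e : Fin n → G) (x : ZMod 2 × (Fin n → ZMod 2)) : G :=
  zp Z x.1 * W e x.2 (List.finRange n)

section

variable (Z : G) (e : Fin n → G) (ε : Fin n → ZMod 2)

@[simp] lemma zp_zero : zp Z (0 : ZMod 2) = 1 := by simp [zp]

@[simp] lemma zp_one : zp Z (1 : ZMod 2) = Z := by
  simp [zp]
  norm_num [ZMod.val_one]

variable {Z} in
lemma zp_add (hZ2 : Z ^ 2 = 1) (a b : ZMod 2) :
    zp Z (a + b) = zp Z a * zp Z b := by
  rcases z2cases a with ha | ha <;> rcases z2cases b with hb | hb <;>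
    subst ha <;> subst hb <;>
    simp [show (1 + 1 : ZMod 2) = 0 by decide, ← pow_two, hZ2]

variable {Z} in
lemma zp_comm (hZc : ∀ g : G, Z * g = g * Z) (a : ZMod 2) (g : G) :
    zp Z a * g = g * zp Z a := by
  have : Commute Z g := hZc g
  exact (this.pow_left a.val).eq

@[simp] lemma W_nil (b : Fin n → ZMod 2) : W e b [] = 1 := rfl

@[simp] lemma W_cons (b : Fin n → ZMod 2) (i : Fin n) (L : List (Fin n)) :
    W e b (i :: L) = e i ^ (b i).val * W e b L := by
  simp [W]

lemma W_one (b : Fin n → ZMod 2) (L : List (Fin n)) (hb : ∀ l ∈ L, b l = 0) :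
    W e b L = 1 := by
  induction L with
  | nil => rfl
  | cons j L ih =>
    rw [W_cons, hb j (by simp), ih (fun l hl => hb l (by simp [hl]))]
    simp

@[simp] lemma W_zero (L : List (Fin n)) : W e 0 L = 1 :=
  W_one e 0 L (fun _ _ => rfl)

lemma W_delta (i : Fin n) (L : List (Fin n)) (hi : i ∈ L) (hL : L.Nodup) :
    W e (delta i) L = e i := by
  induction L with
  | nil => simp at hi
  | cons j L ih =>
    rw [List.nodup_cons] at hL
    rw [W_cons]
    by_cases hji : j = i
    · subst hji
      rw [W_one e _ L (fun l hl => by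
        have : l ≠ j := fun h => hL.1 (h ▸ hl)
        simp [delta, this])]
      simp [delta, ZMod.val_one]
    · have hiL : i ∈ L := by
        rcases List.mem_cons.mp hi with h | h
        · exact absurd h.symm hji
        · exact h
      rw [ih hiL hL.2]
      simp [delta, hji, Ne.symm]

end

section Rel

variable {Z : G} {e : Fin n → G} {ε : Fin n → ZMod 2}
variable (hZc : ∀ g : G, Z * g = g * Z) (hZ2 : Z ^ 2 = 1)
  (hsq : ∀ i, e i ^ 2 = Z ^ (ε i).val)
  (hcomm : ∀ k l : Fin n, k < l → e k * e l = Z * (e l * e k))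

include hZ2 hcomm in
lemma swap (k l : Fin n) (hkl : k ≠ l) : e k * e l = Z * (e l * e k) := by
  rcases lt_or_gt_of_ne hkl with h | h
  · exact hcomm k l h
  · rw [hcomm l k h, ← mul_assoc, ← pow_two, hZ2, one_mul]

include hZ2 hcomm in
lemma swap_pow (k l : Fin n) (hkl : k ≠ l) (a c : ZMod 2) :
    e k ^ a.val * e l ^ c.val = zp Z (a * c) * (e l ^ c.val * e k ^ a.val) := by
  rcases z2cases a with ha | ha <;> rcases z2cases c with hc | hc <;>
      subst ha <;> subst hc <;>
      simp [ZMod.val_one]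
  exact swap hZ2 hcomm k l hkl

include hZ2 hsq in
lemma self_pow (i : Fin n) (x y : ZMod 2) :
    e i ^ x.val * e i ^ y.val = zp Z (ε i * x * y) * e i ^ (x + y).val := by
  rcases z2cases x with hx | hx <;> rcases z2cases y with hy | hy <;>
      subst hx <;> subst hy <;>
      simp [ZMod.val_one, show (1 + 1 : ZMod 2) = 0 by decide]
  rw [← pow_two, hsq i]; rfl


lemma move1 (z1 z2 x y w : G) (hz1 : ∀ g, z1 * g = g * z1) (hz2 : ∀ g, z2 * g = g * z2)
    (h1 : x * y = z1 * (y * x)) (h2 : x * w = z2 * (w * x)) :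
    x * (y * w) = (z1 * z2) * ((y * w) * x) := by
  calc x * (y * w) = (x * y) * w := (mul_assoc _ _ _).symm
    _ = (z1 * (y * x)) * w := by rw [h1]
    _ = z1 * (y * (x * w)) := by rw [mul_assoc, mul_assoc]
    _ = z1 * (y * (z2 * (w * x))) := by rw [h2]
    _ = z1 * (z2 * (y * (w * x))) := by rw [← mul_assoc y, ← hz2 y, mul_assoc]
    _ = (z1 * z2) * ((y * w) * x) := by
        rw [← mul_assoc, mul_assoc y]

lemma move2 (zc x1 w1 x2 w2 : G) (hzc : ∀ g, zc * g = g * zc)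
    (h : w1 * x2 = zc * (x2 * w1)) :
    (x1 * w1) * (x2 * w2) = zc * ((x1 * x2) * (w1 * w2)) := by
  calc (x1 * w1) * (x2 * w2) = x1 * ((w1 * x2) * w2) := by
        rw [mul_assoc, ← mul_assoc w1]
    _ = x1 * ((zc * (x2 * w1)) * w2) := by rw [h]
    _ = x1 * (zc * ((x2 * w1) * w2)) := by rw [mul_assoc zc]
    _ = zc * (x1 * ((x2 * w1) * w2)) := by rw [← mul_assoc x1, ← hzc x1, mul_assoc]
    _ = zc * ((x1 * x2) * (w1 * w2)) := by rw [mul_assoc x2, ← mul_assoc x1]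

lemma move3 (zs zq x w : G) (hzq : ∀ g, zq * g = g * zq) :
    (zs * x) * (zq * w) = (zs * zq) * (x * w) := by
  calc (zs * x) * (zq * w) = zs * ((x * zq) * w) := by rw [mul_assoc, ← mul_assoc x]
    _ = zs * ((zq * x) * w) := by rw [← hzq x]
    _ = (zs * zq) * (x * w) := by rw [mul_assoc zq, ← mul_assoc]

include hZc hZ2 hcomm in
lemma pull (i : Fin n) (a : ZMod 2) (b : Fin n → ZMod 2) (L : List (Fin n))
    (hL : ∀ l ∈ L, l ≠ i) :
    e i ^ a.val * W e b L = zp Z (a * (L.map b).sum) * (W e b L * e i ^ a.val) := by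
  induction L with
  | nil => simp
  | cons j L ih =>
    have hij : i ≠ j := fun h => hL j (by simp) h.symm
    have step : e i ^ a.val * e j ^ (b j).val
        = zp Z (a * b j) * (e j ^ (b j).val * e i ^ a.val) :=
      swap_pow hZ2 hcomm i j hij a (b j)
    have ih' := ih (fun l hl => hL l (by simp [hl]))
    rw [W_cons, List.map_cons, List.sum_cons, mul_add, zp_add hZ2]
    exact move1 _ _ _ _ _ (zp_comm hZc _) (zp_comm hZc _) step ih'

include hZc hZ2 hcomm in
lemma pull' (i : Fin n) (a : ZMod 2) (b : Fin n → ZMod 2) (L : List (Fin n))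
    (hL : ∀ l ∈ L, l ≠ i) :
    W e b L * e i ^ a.val = zp Z (a * (L.map b).sum) * (e i ^ a.val * W e b L) := by
  have h := pull hZc hZ2 hcomm i a b L hL
  have hz : zp Z (a * (L.map b).sum) * zp Z (a * (L.map b).sum) = 1 := by
    rw [← zp_add hZ2, z2add, zp_zero]
  calc W e b L * e i ^ a.val
      = zp Z (a * (L.map b).sum) * (zp Z (a * (L.map b).sum) *
          (W e b L * e i ^ a.val)) := by rw [← mul_assoc, hz, one_mul]
    _ = zp Z (a * (L.map b).sum) * (e i ^ a.val * W e b L) := by rw [← h]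

include hZc hZ2 hsq hcomm in
lemma W_mul (b d : Fin n → ZMod 2) (L : List (Fin n)) (hL : L.Nodup) :
    W e b L * W e d L = zp Z (qL ε b d L) * W e (b + d) L := by
  induction L with
  | nil => simp [qL]
  | cons i L ih =>
    rw [List.nodup_cons] at hL
    have hmem : ∀ l ∈ L, l ≠ i := fun l hl h => hL.1 (h ▸ hl)
    have key1 := pull' hZc hZ2 hcomm i (d i) b L hmem
    have key2 := self_pow hZ2 hsq (ε := ε) i (b i) (d i)
    have key3 := ih hL.2
    have happ : ((b + d) i).val = (b i + d i).val := by simp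
    calc W e b (i :: L) * W e d (i :: L)
        = (e i ^ (b i).val * W e b L) * (e i ^ (d i).val * W e d L) := by
          rw [W_cons, W_cons]
      _ = zp Z (d i * (L.map b).sum) *
            ((e i ^ (b i).val * e i ^ (d i).val) * (W e b L * W e d L)) :=
          move2 _ _ _ _ _ (zp_comm hZc _) key1
      _ = zp Z (d i * (L.map b).sum) *
            ((zp Z (ε i * b i * d i) * e i ^ (b i + d i).val) *
             (zp Z (qL ε b d L) * W e (b + d) L)) := by rw [key2, key3]
      _ = zp Z (d i * (L.map b).sum) *
            ((zp Z (ε i * b i * d i) * zp Z (qL ε b d L)) *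
             (e i ^ (b i + d i).val * W e (b + d) L)) := by
          rw [move3 _ _ _ _ (zp_comm hZc _)]
      _ = zp Z (qL ε b d (i :: L)) * W e (b + d) (i :: L) := by
          rw [← mul_assoc, ← zp_add hZ2, ← zp_add hZ2, W_cons, happ]
          congr 2
          show d i * (L.map b).sum + (ε i * b i * d i + qL ε b d L) = _
          show _ = ε i * b i * d i + d i * (L.map b).sum + qL ε b d L
          ring

include hZc hZ2 hsq hcomm in
lemma f_mul (x y : ZMod 2 × (Fin n → ZMod 2)) :
    f Z e x * f Z e y = f Z e (star ε x y) := by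
  obtain ⟨a, b⟩ := x
  obtain ⟨c, d⟩ := y
  show zp Z a * W e b (List.finRange n) * (zp Z c * W e d (List.finRange n)) = _
  calc zp Z a * W e b (List.finRange n) * (zp Z c * W e d (List.finRange n))
      = (zp Z a * zp Z c) * (W e b (List.finRange n) * W e d (List.finRange n)) :=
        move3 _ _ _ _ (zp_comm hZc _)
    _ = (zp Z a * zp Z c) * (zp Z (qL ε b d (List.finRange n)) *
          W e (b + d) (List.finRange n)) := by
        rw [W_mul hZc hZ2 hsq hcomm b d _ (List.nodup_finRange n)]
    _ = f Z e (star ε (a, b) (c, d)) := by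
        rw [f, star, ← mul_assoc, ← zp_add hZ2, ← zp_add hZ2]

include hZc hZ2 hsq hcomm in
lemma f_prod (xs : List (ZMod 2 × (Fin n → ZMod 2))) :
    (xs.map (f Z e)).prod = f Z e (xs.foldr (star ε) (0, 0)) := by
  induction xs with
  | nil => simp [f]
  | cons x xs ih =>
    rw [List.map_cons, List.prod_cons, ih, f_mul hZc hZ2 hsq hcomm, List.foldr_cons]

lemma fZ : f Z e ((1 : ZMod 2), (0 : Fin n → ZMod 2)) = Z := by simp [f]

lemma fe (i : Fin n) : f Z e ((0 : ZMod 2), delta i) = e i := by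
  simp [f, W_delta e i _ (List.mem_finRange i) (List.nodup_finRange n)]

lemma f_one : f Z e ((0 : ZMod 2), (0 : Fin n → ZMod 2)) = 1 := by simp [f]

lemma star_inv (x : ZMod 2 × (Fin n → ZMod 2)) :
    star ε x (x.1 + qL ε x.2 x.2 (List.finRange n), x.2) = (0, 0) := by
  obtain ⟨a, b⟩ := x
  have hb : b + b = 0 := funext fun i => z2add (b i)
  simp only [star, hb]
  congr 1
  rw [show a + (a + qL ε b b (List.finRange n)) + qL ε b b (List.finRange n)
    = (a + a) + (qL ε b b (List.finRange n) + qL ε b b (List.finRange n)) by ring,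
    z2add, z2add, add_zero]

include hZc hZ2 hsq hcomm in
lemma f_surjective (hclos : Subgroup.closure (Set.range e ∪ {Z}) = ⊤) :
    Function.Surjective (f Z e) := by
  let S : Subgroup G :=
    { carrier := Set.range (f Z e)
      one_mem' := ⟨(0, 0), f_one⟩
      mul_mem' := by
        rintro _ _ ⟨x, rfl⟩ ⟨y, rfl⟩
        exact ⟨star ε x y, (f_mul hZc hZ2 hsq hcomm x y).symm⟩
      inv_mem' := by
        rintro _ ⟨x, rfl⟩
        refine ⟨(x.1 + qL ε x.2 x.2 (List.finRange n), x.2), ?_⟩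
        have := f_mul hZc hZ2 hsq hcomm (Z := Z) (e := e)
          x (x.1 + qL ε x.2 x.2 (List.finRange n), x.2)
        rw [star_inv, f_one] at this
        exact (inv_eq_of_mul_eq_one_right this).symm }
  have hle : Subgroup.closure (Set.range e ∪ {Z}) ≤ S := by
    rw [Subgroup.closure_le]
    rintro g (⟨i, rfl⟩ | rfl)
    · exact ⟨((0 : ZMod 2), delta i), fe i⟩
    · exact ⟨((1 : ZMod 2), (0 : Fin n → ZMod 2)), fZ⟩
  intro g
  have : g ∈ S := by
    have : (⊤ : Subgroup G) ≤ S := hclos ▸ hle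
    exact this (Subgroup.mem_top g)
  exact this


lemma card_M : Nat.card (ZMod 2 × (Fin n → ZMod 2)) = 2 ^ (n + 1) := by
  simp only [Nat.card_eq_fintype_card, Fintype.card_prod, Fintype.card_fun, ZMod.card,
    Fintype.card_fin]
  rw [pow_succ]
  ring

include hZc hZ2 hsq hcomm in
lemma f_bijective (hclos : Subgroup.closure (Set.range e ∪ {Z}) = ⊤)
    (hcard : Nat.card G = 2 ^ (n + 1)) : Function.Bijective (f Z e) := by
  have hfin : Finite G := Nat.finite_of_card_ne_zero (by rw [hcard]; positivity)
  rw [Nat.bijective_iff_surjective_and_card]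
  exact ⟨f_surjective hZc hZ2 hsq hcomm hclos, by rw [card_M, hcard]⟩

lemma fa (a : ZMod 2) : f Z e (a, (0 : Fin n → ZMod 2)) = zp Z a := by simp [f]

lemma foldr_snd (xs : List (ZMod 2 × (Fin n → ZMod 2))) :
    (xs.foldr (star ε) (0, 0)).2 = (xs.map Prod.snd).sum := by
  induction xs with
  | nil => rfl
  | cons x xs ih =>
    rw [List.foldr_cons, List.map_cons, List.sum_cons, ← ih]
    rfl

lemma sum_apply (j : Fin n) (l : List (Fin n → ZMod 2)) :
    l.sum j = (l.map (fun b => b j)).sum := by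
  induction l with
  | nil => rfl
  | cons x l ih => rw [List.sum_cons, List.map_cons, List.sum_cons, ← ih]; rfl

end Rel


end CliffordAux

open CliffordAux

/-- `G` is the discrete Clifford group `Q(t)` with `t i = Z ^ (ε i)`. -/
def IsCliffordGroup {G : Type*} [Group G] (n : ℕ) (ε : Fin n → ZMod 2)
    (Z : G) (e : Fin n → G) : Prop :=
  (∀ g : G, Z * g = g * Z) ∧ Z ^ 2 = 1 ∧ Z ≠ 1 ∧
    (∀ i, e i ^ 2 = Z ^ (ε i).val) ∧
    (∀ k l : Fin n, k < l → e k * e l = Z * (e l * e k)) ∧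
    Nat.card G = 2 ^ (n + 1) ∧
    Subgroup.closure (Set.range e ∪ {Z}) = ⊤

/-- for `n ≥ 2` the even part `Q(t)₀ = ker d` is isomorphic to
`Q(Zt₁t₂, Zt₁t₃, …, Zt₁tₙ)` and has index 2 in `Q(t)`. -/
theorem clifford_group_even_part
    {n : ℕ} (hn : 2 ≤ n) {G G' : Type*} [Group G] [Group G']
    (ε : Fin n → ZMod 2) (Z : G) (e : Fin n → G) (h : IsCliffordGroup n ε Z e)
    (d : G → ZMod 2) (hd : ∀ a b : G, d (a * b) = d a + d b)
    (hde : ∀ i, d (e i) = 1) (hdZ : d Z = 0)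
    (Z' : G') (e' : Fin (n - 1) → G')
    (h' : IsCliffordGroup (n - 1)
      (fun k => 1 + ε ⟨0, by omega⟩ +
        ε ⟨(k : ℕ) + 1, by have := k.isLt; omega⟩) Z' e')
    (H : Subgroup G) (hH : ∀ g : G, g ∈ H ↔ d g = 0) :
    Nonempty (H ≃* G') ∧ H.index = 2 := by
  classical
  obtain ⟨hZc, hZ2, hZne, hsq, hcomm, hcard, hclos⟩ := h
  obtain ⟨hZc', hZ2', hZne', hsq', hcomm', hcard', hclos'⟩ := h'
  have hfinG : Finite G := Nat.finite_of_card_ne_zero (by rw [hcard]; positivity)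
  -- index computation
  have hd1 : d 1 = 0 := by
    have := hd 1 1
    rw [one_mul] at this
    exact (left_eq_add.mp this)
  let φ : G →* Multiplicative (ZMod 2) :=
    { toFun := fun g => Multiplicative.ofAdd (d g)
      map_one' := by simp [hd1]
      map_mul' := fun a b => by simp [hd, ofAdd_add] }
  have hker : H = φ.ker := by
    ext g
    rw [hH g, MonoidHom.mem_ker]
    show d g = 0 ↔ Multiplicative.ofAdd (d g) = 1
    constructor
    · intro hg; rw [hg]; rfl
    · intro hg
      have := congrArg Multiplicative.toAdd hg
      simpa using this
  let i0 : Fin n := ⟨0, by omega⟩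
  have hφsurj : Function.Surjective φ := by
    intro c
    rcases z2cases (Multiplicative.toAdd c) with hc | hc
    · exact ⟨1, by
        show Multiplicative.ofAdd (d 1) = c
        rw [hd1]
        exact (Multiplicative.toAdd.injective (by simpa using hc.symm))⟩
    · exact ⟨e i0, by
        show Multiplicative.ofAdd (d (e i0)) = c
        rw [hde]
        exact (Multiplicative.toAdd.injective (by simpa using hc.symm))⟩
  have hidx : H.index = 2 := by
    rw [hker, Subgroup.index_ker]
    rw [MonoidHom.range_eq_top.mpr hφsurj, Subgroup.card_top]
    simp [Nat.card_eq_fintype_card]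
  have hcardH : Nat.card H = 2 ^ (n - 1 + 1) := by
    have h1 := Subgroup.card_mul_index H
    rw [hidx, hcard] at h1
    have h2 : (2 : ℕ) ^ (n + 1) = 2 ^ n * 2 := by ring
    have h3 : n - 1 + 1 = n := by omega
    rw [h3]
    rw [h2] at h1
    exact Nat.eq_of_mul_eq_mul_right (by norm_num) h1
  -- the H-side generators
  let lift : Fin (n - 1) → Fin n := fun k => ⟨(k : ℕ) + 1, by have := k.isLt; omega⟩
  let εH : Fin (n - 1) → ZMod 2 := fun k => 1 + ε i0 + ε (lift k)
  have hεH : (fun k : Fin (n - 1) => 1 + ε ⟨0, by omega⟩ +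
      ε ⟨(k : ℕ) + 1, by have := k.isLt; omega⟩) = εH := rfl
  let ZH : H := ⟨Z, (hH Z).mpr hdZ⟩
  let bH : Fin (n - 1) → H := fun k => ⟨e i0 * e (lift k), by
    rw [hH, hd, hde, hde]; decide⟩
  have hlift0 : ∀ k, i0 < lift k := fun k => by
    simp only [Fin.lt_def, lift, i0]
    omega
  have hZcH : ∀ g : H, ZH * g = g * ZH := fun g => Subtype.ext (hZc g)
  have hZ2H : ZH ^ 2 = 1 := Subtype.ext (by
    show ((ZH ^ 2 : H) : G) = 1
    rw [SubmonoidClass.coe_pow]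
    exact hZ2)
  -- key computation in G
  have sub : ∀ j j' : Fin n, i0 < j →
      (e i0 * e j) * (e i0 * e j') = Z * ((e i0 * e i0) * (e j * e j')) := by
    intro j j' hj
    exact move2 Z (e i0) (e j) (e i0) (e j') hZc
      (swap hZ2 hcomm j i0 (Fin.ne_of_gt hj))
  have hsqG : ∀ k, ((e i0 * e (lift k)) ^ 2 : G) = Z ^ (εH k).val := by
    intro k
    rw [pow_two, sub (lift k) (lift k) (hlift0 k)]
    rw [← pow_two, ← pow_two, hsq i0, hsq (lift k)]
    show _ = zp Z (1 + ε i0 + ε (lift k))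
    rw [zp_add hZ2, zp_add hZ2, zp_one, mul_assoc]
    rfl
  have hsqH : ∀ k, bH k ^ 2 = ZH ^ (εH k).val := fun k => Subtype.ext (by
    show ((bH k ^ 2 : H) : G) = ((ZH ^ (εH k).val : H) : G)
    rw [SubmonoidClass.coe_pow, SubmonoidClass.coe_pow]
    exact hsqG k)
  have hcommH : ∀ k l : Fin (n - 1), k < l → bH k * bH l = ZH * (bH l * bH k) := by
    intro k l hkl
    refine Subtype.ext ?_
    show (e i0 * e (lift k)) * (e i0 * e (lift l))
        = Z * ((e i0 * e (lift l)) * (e i0 * e (lift k)))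
    rw [sub (lift k) (lift l) (hlift0 k), sub (lift l) (lift k) (hlift0 l)]
    have hll : lift k < lift l := by
      simp only [Fin.lt_def, lift]
      omega
    rw [hcomm (lift k) (lift l) hll]
    rw [← mul_assoc (e i0 * e i0) Z, ← hZc (e i0 * e i0), mul_assoc]
  -- model maps
  have fG_bij := f_bijective hZc hZ2 hsq hcomm hclos hcard
  have hsq'' : ∀ k, e' k ^ 2 = Z' ^ (εH k).val := hsq'
  have fG'_bij := f_bijective hZc' hZ2' hsq'' hcomm' hclos' hcard'
  have fH_mul := f_mul (Z := ZH) (e := bH) (ε := εH) hZcH hZ2H hsqH hcommH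
  let P : (Fin (n-1) → ZMod 2) → Fin (n-1) → (ZMod 2 × (Fin n → ZMod 2)) :=
    fun b k => if b k = 0 then (0, 0) else star ε (0, delta i0) (0, delta (lift k))
  let F : (Fin (n-1) → ZMod 2) → ZMod 2 × (Fin n → ZMod 2) :=
    fun b => ((List.finRange (n-1)).map (P b)).foldr (star ε) (0, 0)
  have hcoe : ∀ x : ZMod 2 × (Fin (n-1) → ZMod 2),
      ((f ZH bH x : H) : G) = f Z e (star ε (x.1, 0) (F x.2)) := by
    rintro ⟨a, b⟩
    have hfac : ∀ k, (e i0 * e (lift k)) ^ (b k).val = f Z e (P b k) := by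
      intro k
      rcases z2cases (b k) with hb | hb
      · have hP : P b k = (0, 0) := by simp [P, hb]
        rw [hb, hP]
        show _ ^ (0 : ZMod 2).val = _
        rw [f_one]
        simp
      · have hP : P b k = star ε (0, delta i0) (0, delta (lift k)) := by
          simp [P, hb]
        rw [hb, hP]
        show _ ^ (1 : ZMod 2).val = _
        rw [ZMod.val_one, pow_one, ← fe (Z := Z) (e := e) i0,
          ← fe (Z := Z) (e := e) (lift k), f_mul hZc hZ2 hsq hcomm]
    have hW : (H.subtype (W bH b (List.finRange (n-1))) : G)
        = ((List.finRange (n-1)).map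
            (fun k => (e i0 * e (lift k)) ^ (b k).val)).prod := by
      rw [W, map_list_prod, List.map_map]
      congr 1
    have step1 : ((f ZH bH (a, b) : H) : G)
        = Z ^ a.val * ((List.finRange (n-1)).map
            (fun k => (e i0 * e (lift k)) ^ (b k).val)).prod := by
      show H.subtype (zp ZH a * W bH b (List.finRange (n-1))) = _
      rw [map_mul, hW]
      congr 1
    rw [step1]
    have step2 : ((List.finRange (n-1)).map
        (fun k => (e i0 * e (lift k)) ^ (b k).val)).prod
        = f Z e (F b) := by
      have : ((List.finRange (n-1)).map
          (fun k => (e i0 * e (lift k)) ^ (b k).val))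
          = ((List.finRange (n-1)).map (P b)).map (f Z e) := by
        rw [List.map_map]
        exact List.map_congr_left (fun k _ => hfac k)
      rw [this, f_prod hZc hZ2 hsq hcomm]
    rw [step2, show Z ^ a.val = f Z e (a, (0 : Fin n → ZMod 2)) from (fa (Z := Z) (e := e) a).symm,
      f_mul hZc hZ2 hsq hcomm]
  have hFsnd : ∀ (b : Fin (n-1) → ZMod 2) (k0 : Fin (n-1)),
      (F b).2 (lift k0) = b k0 := by
    intro b k0
    show (((List.finRange (n-1)).map (P b)).foldr (star ε) (0, 0)).2 (lift k0) = b k0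
    rw [foldr_snd, List.map_map, sum_apply, List.map_map]
    have hval : ∀ k, ((fun l => l (lift k0)) ∘ Prod.snd ∘ P b) k
        = if k = k0 then b k0 else 0 := by
      intro k
      show (P b k).2 (lift k0) = _
      have h1 : delta (n := n) i0 (lift k0) = 0 := by
        simp [delta, (hlift0 k0).ne']
      have h2 : delta (n := n) (lift k) (lift k0) = if k = k0 then 1 else 0 := by
        by_cases hk : k = k0
        · subst hk; simp [delta]
        · have : lift k0 ≠ lift k := by
            intro hh
            apply hk
            have := congrArg Fin.val hh
            simp only [lift] at this
            exact Fin.ext (by omega)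
          simp [delta, this, hk]
      rcases z2cases (b k) with hb | hb
      · have hP : P b k = (0, 0) := by simp [P, hb]
        rw [hP]
        by_cases hk : k = k0
        · subst hk; simp [hb]
        · simp [hk]
      · have hP : P b k = star ε (0, delta i0) (0, delta (lift k)) := by
          simp [P, hb]
        rw [hP]
        show (delta i0 + delta (lift k)) (lift k0) = _
        rw [Pi.add_apply, h1, h2, zero_add]
        by_cases hk : k = k0
        · subst hk; simp [← hb]
        · simp [hk]
    rw [List.map_congr_left (fun k _ => hval k), ← Fin.sum_univ_def]
    simp
  have hFinj : Function.Injective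
      (fun x : ZMod 2 × (Fin (n-1) → ZMod 2) => star ε (x.1, 0) (F x.2)) := by
    rintro ⟨a, b⟩ ⟨c, dd⟩ hxy
    have h2 := congrArg Prod.snd hxy
    have hb : b = dd := by
      funext k
      have := congrArg (fun v => v (lift k)) h2
      simp only [CliffordAux.star] at this
      simpa [CliffordAux.star, hFsnd] using this
    subst hb
    have h1 := congrArg Prod.fst hxy
    simp only [CliffordAux.star] at h1
    have : a = c := by
      have := add_right_cancel h1
      exact add_right_cancel this
    rw [this]
  have fH_inj : Function.Injective (f ZH bH) := by
    intro x y hxy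
    apply hFinj
    apply fG_bij.injective
    rw [← hcoe, ← hcoe, hxy]
  have hfinH : Finite H := inferInstance
  have fH_bij : Function.Bijective (f ZH bH) := by
    rw [Nat.bijective_iff_injective_and_card]
    exact ⟨fH_inj, by rw [card_M, hcardH]⟩
  refine ⟨⟨?_⟩, hidx⟩
  let eH := Equiv.ofBijective _ fH_bij
  let eG' := Equiv.ofBijective _ fG'_bij
  refine { toEquiv := eH.symm.trans eG', map_mul' := ?_ }
  intro x y
  show eG' (eH.symm (x * y)) = eG' (eH.symm x) * eG' (eH.symm y)
  have key : ∀ u v, eH (star εH u v) = eH u * eH v := fun u v => (fH_mul u v).symm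
  have h1 : eH.symm (x * y) = star εH (eH.symm x) (eH.symm y) := by
    apply eH.injective
    rw [Equiv.apply_symm_apply, key, Equiv.apply_symm_apply, Equiv.apply_symm_apply]
  rw [h1]
  show f Z' e' (star εH _ _) = f Z' e' _ * f Z' e' _
  rw [f_mul hZc' hZ2' hsq'' hcomm']
end
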